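/- (Second-order smoothness of the regularized covariance objective.) Let k be a positive integer, γ ∈ (0,1), τ > 0, let G ∈ ℝ^{k×k} be any symmetric matrix, and define f(Σ) := (τ/(2(1−γ))) log det Σ − (1/(1−γ)) Tr(ΣG) for symmetric positive definite Σ ∈ ℝ^{k×k}. Fix 0 < a < 1 and set M_a := τ(−log a + a − 1)/(2(1−γ)(a−1)²). Then for all symmetric positive definite X, Y ∈ ℝ^{k×k} with aI ⪯ X ⪯ I and aI ⪯ Y ⪯ I, one has 0 ≤ f(X) − f(Y) + Tr( ((τ/(2(1−γ)))X⁻¹ − (1/(1−γ))G) · (Y − X) ) ≤ M_a · Tr( (X⁻¹Y − I)² ). Moreover M_a ≥ τ/(4(1−γ)). -/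

import Mathlib

open Matrix


noncomputable def spec {m l : ℕ} (M : Matrix (Fin m) (Fin l) ℝ) : ℝ :=
  ‖LinearMap.toContinuousLinearMap (Matrix.toEuclideanLin M)‖

noncomputable def sigMin {m l : ℕ} (M : Matrix (Fin m) (Fin l) ℝ) : ℝ :=
  sInf {r : ℝ | ∃ x : EuclideanSpace ℝ (Fin l), ‖x‖ = 1 ∧
    r = ‖LinearMap.toContinuousLinearMap (Matrix.toEuclideanLin M) x‖}

noncomputable def frob {m l : ℕ} (M : Matrix (Fin m) (Fin l) ℝ) : ℝ :=
  Real.sqrt (Matrix.trace (Mᵀ * M))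

def loewner {m : ℕ} (X Y : Matrix (Fin m) (Fin m) ℝ) : Prop :=
  (Y - X).PosSemidef

noncomputable def Pmat {n k : ℕ} (γ : ℝ) (A : Matrix (Fin n) (Fin n) ℝ)
    (B : Matrix (Fin n) (Fin k) ℝ) (Q : Matrix (Fin n) (Fin n) ℝ)
    (R : Matrix (Fin k) (Fin k) ℝ) (K : Matrix (Fin k) (Fin n) ℝ) :
    Matrix (Fin n) (Fin n) ℝ :=
  ∑' t : ℕ, γ ^ t • (((A - B * K)ᵀ) ^ t * (Q + Kᵀ * R * K) * (A - B * K) ^ t)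

noncomputable def Emat {n k : ℕ} (γ : ℝ) (A : Matrix (Fin n) (Fin n) ℝ)
    (B : Matrix (Fin n) (Fin k) ℝ) (Q : Matrix (Fin n) (Fin n) ℝ)
    (R : Matrix (Fin k) (Fin k) ℝ) (K : Matrix (Fin k) (Fin n) ℝ) :
    Matrix (Fin k) (Fin n) ℝ :=
  -(γ • (Bᵀ * Pmat γ A B Q R K * (A - B * K))) + R * K

noncomputable def Smat {n k : ℕ} (γ : ℝ) (A : Matrix (Fin n) (Fin n) ℝ)
    (B : Matrix (Fin n) (Fin k) ℝ) (W : Matrix (Fin n) (Fin n) ℝ)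
    (D₀ : Matrix (Fin n) (Fin n) ℝ) (K : Matrix (Fin k) (Fin n) ℝ)
    (Sg : Matrix (Fin k) (Fin k) ℝ) : Matrix (Fin n) (Fin n) ℝ :=
  ∑' t : ℕ, γ ^ t •
    ((A - B * K) ^ t * D₀ * ((A - B * K)ᵀ) ^ t +
      ∑ s ∈ Finset.Icc 1 t,
        (A - B * K) ^ (t - s) * (B * Sg * Bᵀ + W) * ((A - B * K)ᵀ) ^ (t - s))

noncomputable def Cost {n k : ℕ} (γ τ : ℝ) (A : Matrix (Fin n) (Fin n) ℝ)
    (B : Matrix (Fin n) (Fin k) ℝ) (Q : Matrix (Fin n) (Fin n) ℝ)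
    (R : Matrix (Fin k) (Fin k) ℝ) (W : Matrix (Fin n) (Fin n) ℝ)
    (D₀ : Matrix (Fin n) (Fin n) ℝ) (K : Matrix (Fin k) (Fin n) ℝ)
    (Sg : Matrix (Fin k) (Fin k) ℝ) : ℝ :=
  Matrix.trace (D₀ * Pmat γ A B Q R K) +
    (1 / (1 - γ)) *
      (Matrix.trace (Sg * (R + γ • (Bᵀ * Pmat γ A B Q R K * B))) -
        (τ / 2) * ((k : ℝ) + Real.log ((2 * Real.pi) ^ k * Sg.det)) +
        γ * Matrix.trace (W * Pmat γ A B Q R K))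

noncomputable def fent {n k : ℕ} (γ τ : ℝ) (A : Matrix (Fin n) (Fin n) ℝ)
    (B : Matrix (Fin n) (Fin k) ℝ) (Q : Matrix (Fin n) (Fin n) ℝ)
    (R : Matrix (Fin k) (Fin k) ℝ) (K : Matrix (Fin k) (Fin n) ℝ)
    (Sg : Matrix (Fin k) (Fin k) ℝ) : ℝ :=
  (τ / (2 * (1 - γ))) * Real.log Sg.det -
    (1 / (1 - γ)) * Matrix.trace (Sg * (R + γ • (Bᵀ * Pmat γ A B Q R K * B)))

/-- The objective `f(Σ) = (τ/(2(1−γ))) log det Σ − (1/(1−γ)) Tr(ΣG)`. -/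
noncomputable def fG (k : ℕ) (γ τ : ℝ) (G : Matrix (Fin k) (Fin k) ℝ)
    (Sg : Matrix (Fin k) (Fin k) ℝ) : ℝ :=
  (τ / (2 * (1 - γ))) * Real.log Sg.det - (1 / (1 - γ)) * Matrix.trace (Sg * G)

/-! After the congruence `X ↦ S X Sᴴ = 1`, `Y ↦ Z = S Y Sᴴ` (`S = X^{-1/2}`), the gap
`f X - f Y + ⟪∇f X, Y - X⟫` becomes `τ / (2 (1 - γ)) · ∑ (λ - 1 - log λ)` over the
eigenvalues `λ` of `Z`, and `Tr ((X⁻¹ Y - 1)²) = ∑ (λ - 1)²`. Since `Y ⪰ a I ⪰ a X`, every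
`λ ≥ a`, so all reduces to the scalar bound `0 ≤ t - 1 - log t ≤ M (t - 1)²` for `t ≥ a`,
where `M = (a - 1 - log a) / (a - 1)²` is the value at `a` of the decreasing function
`t ↦ (t - 1 - log t) / (t - 1)²`; its limit `1/2` at `t = 1` gives `M ≥ 1/2`. -/

namespace Real

open Set

lemma add_sq_div_two_le_neg_log_one_sub {u : ℝ} (hu0 : 0 ≤ u) (hu1 : u < 1) :
    u + u ^ 2 / 2 ≤ -log (1 - u) := by
  have hsum := hasSum_pow_div_log_of_abs_lt_one (by rwa [abs_of_nonneg hu0])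
  have hpartial := sum_le_hasSum (Finset.range 2) (fun i _ => by positivity) hsum
  norm_num [Finset.sum_range_succ] at hpartial
  linarith

lemma half_le_neg_log_add_sub_one_div_sq {a : ℝ} (ha0 : 0 < a) (ha1 : a < 1) :
    1 / 2 ≤ (-log a + a - 1) / (a - 1) ^ 2 := by
  have h := add_sq_div_two_le_neg_log_one_sub (u := 1 - a) (by linarith) (by linarith)
  rw [sub_sub_cancel] at h
  rw [le_div_iff₀ (by nlinarith)]
  nlinarith

lemma hasDerivAt_mul_sub_one_sq_sub_add_log (M : ℝ) {x : ℝ} (hx : 0 < x) :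
    HasDerivAt (fun t => M * (t - 1) ^ 2 - (t - 1) + log t)
      ((x - 1) * (2 * M * x - 1) / x) x := by
  have h := ((((hasDerivAt_id' x).sub_const 1).fun_pow 2).const_mul M |>.sub
    ((hasDerivAt_id' x).sub_const 1)).add (hasDerivAt_log hx.ne')
  refine h.congr_deriv ?_
  field_simp
  ring

/-- `φ t = M (t - 1)² - (t - 1) + log t` vanishes at `a` and at `1`, and the sign pattern of
`φ' t = (t - 1)(2 M t - 1) / t` (with `2 M ≥ 1`) makes it nonnegative on `[a, ∞)`. -/
theorem sub_one_sub_log_le {a t : ℝ} (ha0 : 0 < a) (ha1 : a < 1) (hat : a ≤ t) :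
    t - 1 - log t ≤ (-log a + a - 1) / (a - 1) ^ 2 * (t - 1) ^ 2 := by
  set M := (-log a + a - 1) / (a - 1) ^ 2 with hM
  set φ : ℝ → ℝ := fun t => M * (t - 1) ^ 2 - (t - 1) + log t with hφ
  have hM2 : 1 / 2 ≤ M := half_le_neg_log_add_sub_one_div_sq ha0 ha1
  have hφa : φ a = 0 := by
    simp only [hφ, hM]; field_simp [show a - 1 ≠ 0 by linarith]; ring
  have hφ1 : φ 1 = 0 := by simp [hφ]
  have hderiv : ∀ {D : Set ℝ}, D ⊆ Ioi 0 → ∀ x ∈ interior D,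
      HasDerivWithinAt φ ((x - 1) * (2 * M * x - 1) / x) (interior D) x := fun hD x hx =>
    (hasDerivAt_mul_sub_one_sq_sub_add_log M (hD (interior_subset hx))).hasDerivWithinAt
  have hcont : ∀ {D : Set ℝ}, D ⊆ Ioi 0 → ContinuousOn φ D := fun hD x hx =>
    (hasDerivAt_mul_sub_one_sq_sub_add_log M (hD hx)).continuousAt.continuousWithinAt
  have mono : ∀ {D : Set ℝ}, Convex ℝ D → D ⊆ Ioi 0 →
      (∀ x ∈ D, 0 ≤ (x - 1) * (2 * M * x - 1)) → MonotoneOn φ D := fun hc hD h =>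
    monotoneOn_of_hasDerivWithinAt_nonneg hc (hcont hD) (hderiv hD) fun x hx =>
      div_nonneg (h x (interior_subset hx)) (hD (interior_subset hx)).le
  have anti : ∀ {D : Set ℝ}, Convex ℝ D → D ⊆ Ioi 0 →
      (∀ x ∈ D, (x - 1) * (2 * M * x - 1) ≤ 0) → AntitoneOn φ D := fun hc hD h =>
    antitoneOn_of_hasDerivWithinAt_nonpos hc (hcont hD) (hderiv hD) fun x hx =>
      div_nonpos_of_nonpos_of_nonneg (h x (interior_subset hx)) (hD (interior_subset hx)).le
  suffices 0 ≤ φ t by simp only [hφ] at this; linarith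
  rcases le_or_gt 1 t with h1t | ht1
  · have := mono (convex_Ici 1) (fun x (hx : 1 ≤ x) => one_pos.trans_le hx)
      (fun x hx => mul_nonneg (by linarith [mem_Ici.mp hx]) (by nlinarith [mem_Ici.mp hx]))
      self_mem_Ici h1t h1t
    linarith
  rcases le_or_gt (2 * M * t) 1 with hMt | hMt
  · have := mono (convex_Icc a t) (fun x hx => ha0.trans_le hx.1)
      (fun x hx => mul_nonneg_of_nonpos_of_nonpos (by linarith [hx.2]) (by nlinarith [hx.2]))
      (left_mem_Icc.mpr hat) (right_mem_Icc.mpr hat) hat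
    linarith
  · have := anti (convex_Icc t 1) (fun x hx => (ha0.trans_le hat).trans_le hx.1)
      (fun x hx => mul_nonpos_of_nonpos_of_nonneg (by linarith [hx.2]) (by nlinarith [hx.1]))
      (left_mem_Icc.mpr ht1.le) (right_mem_Icc.mpr ht1.le) ht1.le
    linarith

end Real

namespace Matrix

open scoped MatrixOrder

variable {n : Type*} [Fintype n] [DecidableEq n]

lemma trace_mul_sub_one_sq_comm {R : Type*} [CommRing R] (A B : Matrix n n R) :
    ((A * B - 1) ^ 2).trace = ((B * A - 1) ^ 2).trace := by
  have hsq : ∀ C : Matrix n n R, (C - 1) ^ 2 = C * C - 2 • C + 1 := fun C => by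
    rw [sq, sub_mul, mul_sub, mul_sub, mul_one, one_mul, mul_one, two_nsmul]; abel
  simp only [hsq, trace_add, trace_sub, trace_smul, mul_assoc, trace_mul_comm A]

lemma PosDef.exists_mul_mul_conjTranspose_eq_one {X : Matrix n n ℝ} (hX : X.PosDef) :
    ∃ S : Matrix n n ℝ, S * X * Sᴴ = 1 := by
  set R := CFC.sqrt X
  have hRR : R * R = X := CFC.sqrt_mul_sqrt_self X hX.posSemidef.nonneg
  have hRH : Rᴴ = R := (CFC.sqrt_nonneg X).posSemidef.isHermitian.eq
  have hR : IsUnit R.det := (isUnit_iff_isUnit_det R).mp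
    (isUnit_of_mul_isUnit_left (hRR ▸ hX.isUnit))
  refine ⟨R⁻¹, ?_⟩
  rw [conjTranspose_nonsing_inv, hRH, ← hRR, ← mul_assoc, nonsing_inv_mul R hR, one_mul,
    mul_nonsing_inv R hR]

lemma inv_eq_conjTranspose_mul_self_of_mul_mul_conjTranspose_eq_one {X S : Matrix n n ℝ}
    (hS : S * X * Sᴴ = 1) : X⁻¹ = Sᴴ * S := by
  refine inv_eq_right_inv ?_
  rw [← mul_assoc]
  exact mul_eq_one_comm.mp (by rwa [← mul_assoc])

namespace IsHermitian

variable {A : Matrix n n ℝ}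

lemma trace_cfc (hA : A.IsHermitian) (f : ℝ → ℝ) :
    (cfc f A).trace = ∑ i, f (hA.eigenvalues i) := by
  rw [hA.cfc_eq, IsHermitian.cfc, Unitary.conjStarAlgAut_apply, trace_mul_cycle,
    Unitary.coe_star_mul_self, one_mul, trace_diagonal]
  simp

lemma trace_sub_one_sq (hA : A.IsHermitian) :
    ((A - 1) ^ 2).trace = ∑ i, (hA.eigenvalues i - 1) ^ 2 := by
  rw [← hA.trace_cfc (fun x => (x - 1) ^ 2), cfc_pow .., cfc_sub .., cfc_id' .., cfc_const_one ..]

lemma le_eigenvalues_of_posSemidef_sub {r : ℝ} (hA : A.IsHermitian)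
    (h : (A - r • 1).PosSemidef) (i : n) : r ≤ hA.eigenvalues i := by
  have hle : algebraMap ℝ (Matrix n n ℝ) r ≤ A := by
    rw [Algebra.algebraMap_eq_smul_one]; exact h
  rw [algebraMap_le_iff_le_spectrum hA.isSelfAdjoint, hA.spectrum_real_eq_range_eigenvalues] at hle
  exact hle _ ⟨i, rfl⟩

lemma trace_sub_card_sub_log_det_eq_sum (hA : A.IsHermitian)
    (hpos : ∀ i, 0 < hA.eigenvalues i) :
    A.trace - Fintype.card n - Real.log A.det =
      ∑ i, (hA.eigenvalues i - 1 - Real.log (hA.eigenvalues i)) := by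
  rw [hA.trace_eq_sum_eigenvalues, hA.det_eq_prod_eigenvalues]
  simp only [RCLike.ofReal_real_eq_id, id]
  rw [Real.log_prod fun i _ => (hpos i).ne', Finset.sum_sub_distrib, Finset.sum_sub_distrib]
  simp

theorem trace_sub_card_sub_log_det_le (hA : A.IsHermitian) {a : ℝ} (ha0 : 0 < a) (ha1 : a < 1)
    (hAa : (A - a • 1).PosSemidef) :
    0 ≤ A.trace - Fintype.card n - Real.log A.det ∧
      A.trace - Fintype.card n - Real.log A.det ≤
        (-Real.log a + a - 1) / (a - 1) ^ 2 * ((A - 1) ^ 2).trace := by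
  have hle := hA.le_eigenvalues_of_posSemidef_sub hAa
  rw [hA.trace_sub_card_sub_log_det_eq_sum fun i => ha0.trans_le (hle i), hA.trace_sub_one_sq,
    Finset.mul_sum]
  exact ⟨Finset.sum_nonneg fun i _ => by
      linarith [Real.log_le_sub_one_of_pos (ha0.trans_le (hle i))],
    Finset.sum_le_sum fun i _ => Real.sub_one_sub_log_le ha0 ha1 (hle i)⟩

end IsHermitian

theorem log_det_sub_log_det_add_trace_eq {X Y S : Matrix n n ℝ} (hX : 0 < X.det)
    (hY : 0 < Y.det) (hS : S * X * Sᴴ = 1) :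
    Real.log X.det - Real.log Y.det + (X⁻¹ * (Y - X)).trace =
      (S * Y * Sᴴ).trace - Fintype.card n - Real.log (S * Y * Sᴴ).det := by
  have hdetS : S.det * S.det * X.det = 1 := by
    simpa [det_conjTranspose, mul_right_comm] using congrArg det hS
  have hdetZ : (S * Y * Sᴴ).det = Y.det / X.det := by
    rw [eq_div_iff hX.ne', det_mul, det_mul, det_conjTranspose, star_trivial]
    linear_combination Y.det * hdetS
  rw [mul_sub, nonsing_inv_mul X (isUnit_iff_ne_zero.mpr hX.ne'), trace_sub, trace_one,
    inv_eq_conjTranspose_mul_self_of_mul_mul_conjTranspose_eq_one hS, mul_assoc,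
    trace_mul_comm, hdetZ, Real.log_div hY.ne' hX.ne']
  ring

theorem log_det_sub_log_det_add_trace_le {X Y : Matrix n n ℝ} (hX : X.PosDef) (hY : Y.PosDef)
    {a : ℝ} (ha0 : 0 < a) (ha1 : a < 1) (hYX : (Y - a • X).PosSemidef) :
    0 ≤ Real.log X.det - Real.log Y.det + (X⁻¹ * (Y - X)).trace ∧
      Real.log X.det - Real.log Y.det + (X⁻¹ * (Y - X)).trace ≤
        (-Real.log a + a - 1) / (a - 1) ^ 2 * ((X⁻¹ * Y - 1) ^ 2).trace := by
  obtain ⟨S, hS⟩ := hX.exists_mul_mul_conjTranspose_eq_one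
  have hZ : (S * Y * Sᴴ).IsHermitian := isHermitian_mul_mul_conjTranspose S hY.isHermitian
  have hZa : (S * Y * Sᴴ - a • 1).PosSemidef := by
    simpa only [Matrix.mul_sub, Matrix.sub_mul, Matrix.mul_smul, Matrix.smul_mul, hS] using
      hYX.mul_mul_conjTranspose_same S
  have htrace : ((X⁻¹ * Y - 1) ^ 2).trace = ((S * Y * Sᴴ - 1) ^ 2).trace := by
    rw [inv_eq_conjTranspose_mul_self_of_mul_mul_conjTranspose_eq_one hS, mul_assoc,
      trace_mul_sub_one_sq_comm]
  rw [log_det_sub_log_det_add_trace_eq hX.det_pos hY.det_pos hS, htrace]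
  exact hZ.trace_sub_card_sub_log_det_le ha0 ha1 hZa

end Matrix

theorem fG_sub_fG_add_trace_eq (k : ℕ) (γ τ : ℝ) (G X Y : Matrix (Fin k) (Fin k) ℝ) :
    fG k γ τ G X - fG k γ τ G Y +
        (((τ / (2 * (1 - γ))) • X⁻¹ - (1 / (1 - γ)) • G) * (Y - X)).trace =
      τ / (2 * (1 - γ)) * (Real.log X.det - Real.log Y.det + (X⁻¹ * (Y - X)).trace) := by
  simp only [fG, Matrix.sub_mul, Matrix.mul_sub, Matrix.smul_mul, trace_sub, trace_smul,
    smul_eq_mul, trace_mul_comm G]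
  ring

theorem stmt5_general (k : ℕ) (γ τ : ℝ) (hγ1 : γ < 1) (hτ : 0 < τ)
    (G : Matrix (Fin k) (Fin k) ℝ)
    (a : ℝ) (ha0 : 0 < a) (ha1 : a < 1) :
    (∀ X Y : Matrix (Fin k) (Fin k) ℝ, X.PosDef → Y.PosDef →
      loewner (a • (1 : Matrix (Fin k) (Fin k) ℝ)) X →
      loewner X (1 : Matrix (Fin k) (Fin k) ℝ) →
      loewner (a • (1 : Matrix (Fin k) (Fin k) ℝ)) Y →
      loewner Y (1 : Matrix (Fin k) (Fin k) ℝ) →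
      0 ≤ fG k γ τ G X - fG k γ τ G Y +
          Matrix.trace (((τ / (2 * (1 - γ))) • X⁻¹ - (1 / (1 - γ)) • G) * (Y - X)) ∧
      fG k γ τ G X - fG k γ τ G Y +
          Matrix.trace (((τ / (2 * (1 - γ))) • X⁻¹ - (1 / (1 - γ)) • G) * (Y - X)) ≤
        (τ * (-Real.log a + a - 1) / (2 * (1 - γ) * (a - 1) ^ 2)) *
          Matrix.trace ((X⁻¹ * Y - 1) ^ 2)) ∧
    τ / (4 * (1 - γ)) ≤ τ * (-Real.log a + a - 1) / (2 * (1 - γ) * (a - 1) ^ 2) := by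
  have hc : 0 ≤ τ / (2 * (1 - γ)) := div_nonneg hτ.le (by linarith)
  have hM : τ * (-Real.log a + a - 1) / (2 * (1 - γ) * (a - 1) ^ 2) =
      τ / (2 * (1 - γ)) * ((-Real.log a + a - 1) / (a - 1) ^ 2) := by
    rw [mul_div_mul_comm]
  refine ⟨fun X Y hX hY _ hX1 hYa _ => ?_, ?_⟩
  · have hYX : (Y - a • X).PosSemidef := by
      simpa [smul_sub] using hYa.add (hX1.smul ha0.le)
    obtain ⟨hlow, hup⟩ := Matrix.log_det_sub_log_det_add_trace_le hX hY ha0 ha1 hYX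
    rw [fG_sub_fG_add_trace_eq, hM, mul_assoc]
    exact ⟨mul_nonneg hc hlow, mul_le_mul_of_nonneg_left hup hc⟩
  · rw [hM, show τ / (4 * (1 - γ)) = τ / (2 * (1 - γ)) * (1 / 2) by
      rw [div_mul_div_comm]; ring_nf]
    exact mul_le_mul_of_nonneg_left (Real.half_le_neg_log_add_sub_one_div_sq ha0 ha1) hc

/-- Second-order smoothness of the regularized covariance objective. -/
theorem stmt5 (k : ℕ) (hk : 0 < k) (γ τ : ℝ) (hγ0 : 0 < γ) (hγ1 : γ < 1) (hτ : 0 < τ)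
    (G : Matrix (Fin k) (Fin k) ℝ) (hG : G.IsHermitian)
    (a : ℝ) (ha0 : 0 < a) (ha1 : a < 1) :
    (∀ X Y : Matrix (Fin k) (Fin k) ℝ, X.PosDef → Y.PosDef →
      loewner (a • (1 : Matrix (Fin k) (Fin k) ℝ)) X →
      loewner X (1 : Matrix (Fin k) (Fin k) ℝ) →
      loewner (a • (1 : Matrix (Fin k) (Fin k) ℝ)) Y →
      loewner Y (1 : Matrix (Fin k) (Fin k) ℝ) →
      0 ≤ fG k γ τ G X - fG k γ τ G Y +
          Matrix.trace (((τ / (2 * (1 - γ))) • X⁻¹ - (1 / (1 - γ)) • G) * (Y - X)) ∧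
      fG k γ τ G X - fG k γ τ G Y +
          Matrix.trace (((τ / (2 * (1 - γ))) • X⁻¹ - (1 / (1 - γ)) • G) * (Y - X)) ≤
        (τ * (-Real.log a + a - 1) / (2 * (1 - γ) * (a - 1) ^ 2)) *
          Matrix.trace ((X⁻¹ * Y - 1) ^ 2)) ∧
    τ / (4 * (1 - γ)) ≤ τ * (-Real.log a + a - 1) / (2 * (1 - γ) * (a - 1) ^ 2) :=
  stmt5_general k γ τ hγ1 hτ G a ha0 ha1
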